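/- arXiv:2503.04068 — 2 statements merged into one kernel-verified Lean document; each statement's English description precedes it below -/
import Mathlib

section
/- Let z and y be solutions on [0,T] of z'(t) = Q_t(z(t)) and y'(t) = Q̃(y(t)) respectively, with z(0), y(0) ∈ B_r(0), where Q_t is the T/N-periodic switching vector field Q_t(x) = m A_i Σ(W_i x + b_i) and Q̃(x) = ∑_{i=1}^m A_i Σ(W_i x + b_i). Let c = m sup_i ‖A_i‖ |Σ(b_i)|, L = m sup_i K ‖A_i‖ ‖W_i‖, K̃ = L, and X = c + L(r + cT) e^{LT}. Then for all t ∈ [0,T], |z(t) − y(t)| ≤ ( 2(T/N) X + K̃ X T²/(2N) + |z(0) − y(0)| ) e^{K̃ t}. -/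
open Metric Set MeasureTheory

/-- Coordinatewise application of an activation function on `ℝ^d` with the L¹ norm. -/
noncomputable def actVec (d : ℕ) (σ : ℝ → ℝ) (v : PiLp 1 (fun _ : Fin d => ℝ)) :
    PiLp 1 (fun _ : Fin d => ℝ) :=
  WithLp.toLp 1 (fun i => σ (v i))

/-!
Write `F_i x = A_i Σ(W_i x + b_i)`, `h = T/N`, and let `D u = z u - z 0 - ∫₀ᵘ ∑ᵢ F_i (z s) ds` be
the defect of `z` as a solution of the averaged equation. A Grönwall estimate gives
`‖z‖ ≤ (r + cT) e^{LT}`, hence `‖z'‖ ≤ X` and `z` is `X`-Lipschitz. Over one period, `z` moves by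
`∑ᵢ m ∫ F_i (z s) ds` over the subintervals of length `h/m`; rescaling the `i`-th subinterval onto
the whole period by a homothety `φ_i` compares it with `∫ F_i (z s) ds` at a cost of at most
`ℓ_i X ∫ |φ_i s - s| ds ≤ ℓ_i X h²/2`, where `ℓ_i = K ‖A_i‖ ‖W_i‖`. As `∑ᵢ ℓ_i ≤ L`, each full
period adds at most `L X h²/2` to `D`, and the last incomplete one at most `2 X h`. Finally
`z - y - D` has derivative `Q̃(z) - Q̃(y)`, and Grönwall's inequality for it yields the estimate.
-/

open intervalIntegral
open scoped Interval

theorem integral_abs_sub_le {a b β : ℝ} (hβ : β ∈ Icc a b) :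
    ∫ u in a..b, |u - β| ≤ (b - a) ^ 2 / 2 := by
  have hint : ∀ c d : ℝ, IntervalIntegrable (fun u => |u - β|) volume c d :=
    fun c d => (continuous_id.sub continuous_const).abs.intervalIntegrable c d
  have hside : ∀ c : ℝ, ∫ u in Ι β c, |u - β| = (c - β) ^ 2 / 2 := fun c => by
    have := integral_pow_abs_sub_uIoc (a := β) (b := c) 1
    norm_num [sq_abs] at this
    exact this
  rw [← integral_add_adjacent_intervals (hint a β) (hint β b), integral_of_le hβ.1,
    integral_of_le hβ.2, ← uIoc_of_le hβ.1, ← uIoc_of_le hβ.2, uIoc_comm, hside, hside]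
  nlinarith [hβ.1, hβ.2]

theorem integral_abs_contraction_sub_le {p a t₀ h : ℝ} (hp : 1 ≤ p) (hh : 0 ≤ h) (ha : t₀ ≤ a)
    (hah : a + h / p ≤ t₀ + h) :
    ∫ u in t₀..t₀ + h, |p⁻¹ * u + (a - p⁻¹ * t₀) - u| ≤ h ^ 2 / 2 := by
  set q := 1 - p⁻¹
  have hq0 : 0 ≤ q := sub_nonneg.2 (inv_le_one_of_one_le₀ hp)
  have hq1 : q ≤ 1 := sub_le_self _ (by positivity)
  have hqh : a - t₀ ≤ h * q := by simp only [q]; rw [div_eq_inv_mul] at hah; linarith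
  -- the map is the homothety of ratio `p⁻¹` centred at `β` (any centre does when `p = 1`)
  set β := t₀ + (a - t₀) / q
  have hβ : β ∈ Icc t₀ (t₀ + h) :=
    ⟨le_add_of_nonneg_right (div_nonneg (sub_nonneg.2 ha) hq0),
      (add_le_add_iff_left t₀).2 (div_le_of_le_mul₀ hq0 hh hqh)⟩
  have hcontr : ∀ u, p⁻¹ * u + (a - p⁻¹ * t₀) - u = q * (β - u) := fun u => by
    rcases hq0.eq_or_lt with hq | hq
    · have : a = t₀ := le_antisymm (by rw [← hq] at hqh; linarith) ha
      simp only [β, ← hq, this]; linear_combination (u - t₀) * hq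
    · simp only [β]; rw [mul_sub, mul_add, mul_div_cancel₀ _ hq.ne']; simp only [q]; ring
  calc ∫ u in t₀..t₀ + h, |p⁻¹ * u + (a - p⁻¹ * t₀) - u|
      ≤ ∫ u in t₀..t₀ + h, |u - β| := by
        refine integral_mono_on (by linarith) ?_ ?_ fun u _ => ?_
        · exact (by fun_prop : Continuous fun u => |p⁻¹ * u + (a - p⁻¹ * t₀) - u|)
            |>.intervalIntegrable _ _
        · exact (by fun_prop : Continuous fun u => |u - β|).intervalIntegrable _ _
        · rw [hcontr, abs_mul, abs_of_nonneg hq0, abs_sub_comm]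
          exact mul_le_of_le_one_left (abs_nonneg _) hq1
    _ ≤ h ^ 2 / 2 := by simpa using integral_abs_sub_le hβ

theorem Fin.cast_mul_div_add_div_le {m : ℕ} (i : Fin m) {h : ℝ} (hh : 0 ≤ h) :
    (i : ℝ) * (h / m) + h / m ≤ h := by
  have hm : (0 : ℝ) < m := Nat.cast_pos.2 (Nat.zero_lt_of_lt i.isLt)
  have := mul_le_mul_of_nonneg_right (show (i : ℝ) + 1 ≤ m by exact_mod_cast i.isLt)
    (div_nonneg hh hm.le)
  rw [mul_div_cancel₀ h hm.ne'] at this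
  linarith

theorem Fin.sum_le_of_forall_mul_le {m : ℕ} (hm : 0 < m) {a : Fin m → ℝ} {A : ℝ}
    (h : ∀ i, m * a i ≤ A) : ∑ i, a i ≤ A := by
  have : (m : ℝ) * ∑ i, a i ≤ m * A := by
    rw [Finset.mul_sum]; simpa using Finset.sum_le_sum (s := Finset.univ) fun i _ => h i
  exact le_of_mul_le_mul_left this (Nat.cast_pos.2 hm)

theorem gronwallBound_le_add_mul_mul_exp {δ K ε x : ℝ} (hK : 0 ≤ K) (hε : 0 ≤ ε) :
    gronwallBound δ K ε x ≤ (δ + ε * x) * Real.exp (K * x) := by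
  rcases hK.eq_or_lt with rfl | hK
  · simp [gronwallBound_K0]
  · rw [gronwallBound_of_K_ne_0 hK.ne', add_mul]
    have hexp : Real.exp (K * x) - 1 ≤ K * x * Real.exp (K * x) := by
      have h₁ := Real.add_one_le_exp (-(K * x))
      have h₂ : Real.exp (-(K * x)) * Real.exp (K * x) = 1 := by rw [← Real.exp_add]; simp
      nlinarith [Real.exp_pos (K * x)]
    have : ε / K * (Real.exp (K * x) - 1) ≤ ε * x * Real.exp (K * x) := by
      rw [div_mul_eq_mul_div, div_le_iff₀ hK]; nlinarith
    linarith

theorem gronwallBound_ε_eq_K_mul (δ K C x : ℝ) :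
    gronwallBound δ K (K * C) x = (δ + C) * Real.exp (K * x) - C := by
  rcases eq_or_ne K 0 with rfl | hK
  · simp [gronwallBound_K0]
  · rw [gronwallBound_of_K_ne_0 hK]; field_simp; ring

section NormedSpace

variable {E : Type*} [NormedAddCommGroup E]

theorem norm_le_of_norm_sub_le_of_steps {D : ℝ → E} {h δ ε T : ℝ} {N : ℕ} (hh : 0 < h)
    (hNh : N * h = T) (hδ : 0 ≤ δ) (hD0 : D 0 = 0)
    (hstep : ∀ j < N, ‖D ((j + 1) * h) - D (j * h)‖ ≤ δ)
    (htail : ∀ j : ℕ, ∀ u ∈ Icc (j * h) ((j + 1) * h), u ≤ T → ‖D u - D (j * h)‖ ≤ ε) :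
    ∀ u ∈ Icc 0 T, ‖D u‖ ≤ ε + N * δ := by
  intro u hu
  set k := ⌊u / h⌋₊
  have hku : (k : ℝ) * h ≤ u := (le_div_iff₀ hh).1 (Nat.floor_le (div_nonneg hu.1 hh.le))
  have hku' : u ≤ (k + 1) * h := ((div_lt_iff₀ hh).1 (Nat.lt_floor_add_one _)).le
  have hkN : (k : ℝ) ≤ N := le_of_mul_le_mul_right (hku.trans (hu.2.trans hNh.ge)) hh
  have htele : D (k * h) = ∑ j ∈ Finset.range k, (D ((j + 1) * h) - D (j * h)) := by
    simpa [hD0] using (Finset.sum_range_sub (fun j : ℕ => D (j * h)) k).symm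
  calc ‖D u‖ = ‖(D u - D (k * h)) + D (k * h)‖ := by rw [sub_add_cancel]
    _ ≤ ε + k * δ := by
        refine (norm_add_le _ _).trans (add_le_add (htail k u ⟨hku, hku'⟩ hu.2) ?_)
        rw [htele]
        refine (norm_sum_le _ _).trans ?_
        simpa using Finset.sum_le_sum fun j hj =>
          hstep j ((Finset.mem_range.1 hj).trans_le (by exact_mod_cast hkN))
    _ ≤ ε + N * δ := by gcongr

variable [NormedSpace ℝ E]

theorem norm_smul_integral_sub_integral_le {g : ℝ → E} {M p a t₀ h : ℝ} (hM : 0 ≤ M)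
    (hp : 1 ≤ p) (hh : 0 ≤ h) (ha : t₀ ≤ a) (hah : a + h / p ≤ t₀ + h)
    (hgc : ContinuousOn g (Icc t₀ (t₀ + h)))
    (hg : ∀ s ∈ Icc t₀ (t₀ + h), ∀ u ∈ Icc t₀ (t₀ + h), ‖g s - g u‖ ≤ M * |s - u|) :
    ‖p • (∫ s in a..a + h / p, g s) - ∫ u in t₀..t₀ + h, g u‖ ≤ M * (h ^ 2 / 2) := by
  set φ : ℝ → ℝ := fun u => p⁻¹ * u + (a - p⁻¹ * t₀)
  have hp0 : 0 < p := one_pos.trans_le hp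
  have hφ : MapsTo φ (Icc t₀ (t₀ + h)) (Icc t₀ (t₀ + h)) := fun u hu => by
    have : p⁻¹ * (u - t₀) ≤ h / p := by
      rw [div_eq_inv_mul]; exact mul_le_mul_of_nonneg_left (by linarith [hu.2]) (by positivity)
    have : 0 ≤ p⁻¹ * (u - t₀) := mul_nonneg (by positivity) (by linarith [hu.1])
    constructor <;> simp only [φ] <;> nlinarith
  have hsub : uIcc t₀ (t₀ + h) = Icc t₀ (t₀ + h) := uIcc_of_le (by linarith)
  have hrescale : (p • ∫ s in a..a + h / p, g s) = ∫ u in t₀..t₀ + h, g (φ u) := by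
    rw [integral_comp_mul_add g (inv_ne_zero hp0.ne'), inv_inv]
    congr 2 <;> field_simp <;> ring
  rw [hrescale, ← intervalIntegral.integral_sub]
  · calc ‖∫ u in t₀..t₀ + h, (g (φ u) - g u)‖
        ≤ ∫ u in t₀..t₀ + h, M * |φ u - u| := by
          refine norm_integral_le_of_norm_le (by linarith) (ae_of_all _ fun u hu => ?_) ?_
          · exact hg _ (hφ ⟨hu.1.le, hu.2⟩) _ ⟨hu.1.le, hu.2⟩
          · exact (by fun_prop : Continuous fun u => M * |φ u - u|).intervalIntegrable _ _
      _ ≤ M * (h ^ 2 / 2) := by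
          rw [intervalIntegral.integral_const_mul]
          exact mul_le_mul_of_nonneg_left (integral_abs_contraction_sub_le hp hh ha hah) hM
  · exact ((hgc.comp (by fun_prop) hφ).mono hsub.subset).intervalIntegrable
  · exact (hgc.mono hsub.subset).intervalIntegrable

theorem norm_sub_sub_integral_sum_le {m : ℕ} (hm : 0 < m) {F : Fin m → E → E} {ℓ : Fin m → ℝ}
    {z : ℝ → E} {X t₀ h : ℝ} (hh : 0 ≤ h) (hX : 0 ≤ X) (hℓ : ∀ i, 0 ≤ ℓ i)
    (hF : ∀ i x x', ‖F i x - F i x'‖ ≤ ℓ i * ‖x - x'‖)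
    (hz : ∀ s ∈ Icc t₀ (t₀ + h), ∀ u ∈ Icc t₀ (t₀ + h), ‖z s - z u‖ ≤ X * |s - u|)
    (hpiece : ∀ i : Fin m, z (t₀ + i * (h / m) + h / m) - z (t₀ + i * (h / m)) =
      (m : ℝ) • ∫ s in t₀ + i * (h / m)..t₀ + i * (h / m) + h / m, F i (z s)) :
    ‖z (t₀ + h) - z t₀ - ∫ s in t₀..t₀ + h, ∑ i, F i (z s)‖ ≤ (∑ i, ℓ i) * X * (h ^ 2 / 2) := by
  have hm' : (0 : ℝ) < m := Nat.cast_pos.2 hm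
  have hzc : ContinuousOn z (Icc t₀ (t₀ + h)) :=
    (LipschitzOnWith.of_dist_le' (K := X) fun s hs u hu => by
      simpa [dist_eq_norm] using hz s hs u hu).continuousOn
  have hFc : ∀ i, Continuous (F i) := fun i =>
    (LipschitzWith.of_dist_le' (by simpa [dist_eq_norm] using hF i)).continuous
  have hsub : uIcc t₀ (t₀ + h) = Icc t₀ (t₀ + h) := uIcc_of_le (by linarith)
  have htele : z (t₀ + h) - z t₀ =
      ∑ i : Fin m, (z (t₀ + i * (h / m) + h / m) - z (t₀ + i * (h / m))) := by
    rw [Fin.sum_univ_eq_sum_range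
      (fun k => z (t₀ + k * (h / m) + h / m) - z (t₀ + k * (h / m))) m]
    have := Finset.sum_range_sub (fun k : ℕ => z (t₀ + k * (h / m))) m
    push_cast [add_mul, one_mul, ← add_assoc, mul_div_cancel₀ h hm'.ne'] at this
    simpa using this.symm
  rw [htele, integral_finsetSum (f := fun i s => F i (z s)) fun i _ =>
      ((hFc i).comp_continuousOn hzc).mono hsub.subset |>.intervalIntegrable,
    ← Finset.sum_sub_distrib, Finset.sum_mul, Finset.sum_mul]
  refine (norm_sum_le _ _).trans (Finset.sum_le_sum fun i _ => ?_)
  rw [hpiece]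
  refine norm_smul_integral_sub_integral_le (g := fun s => F i (z s)) (a := t₀ + i * (h / m))
    (mul_nonneg (hℓ i) hX) (Nat.one_le_cast.2 hm) hh
    (le_add_of_nonneg_right (by positivity)) ?_ ((hFc i).comp_continuousOn hzc)
    fun s hs u hu => ?_
  · linarith [i.cast_mul_div_add_div_le hh]
  · calc ‖F i (z s) - F i (z u)‖ ≤ ℓ i * ‖z s - z u‖ := hF i _ _
      _ ≤ ℓ i * (X * |s - u|) := mul_le_mul_of_nonneg_left (hz s hs u hu) (hℓ i)
      _ = ℓ i * X * |s - u| := by ring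

theorem norm_le_of_norm_deriv_le_affine {f f' : ℝ → E} {r c L T : ℝ} (hL : 0 ≤ L) (hc : 0 ≤ c)
    (hf : ∀ t ∈ Icc 0 T, HasDerivAt f (f' t) t) (hf0 : ‖f 0‖ ≤ r)
    (hbound : ∀ t ∈ Ico 0 T, ‖f' t‖ ≤ L * ‖f t‖ + c) :
    ∀ t ∈ Icc 0 T, ‖f t‖ ≤ (r + c * T) * Real.exp (L * T) := by
  intro t ht
  have hr : 0 ≤ r := (norm_nonneg _).trans hf0
  calc ‖f t‖ ≤ gronwallBound r L c (t - 0) :=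
        norm_le_gronwallBound_of_norm_deriv_right_le
          (fun s hs => (hf s hs).continuousAt.continuousWithinAt)
          (fun s hs => (hf s (Ico_subset_Icc_self hs)).hasDerivWithinAt) hf0 hbound t ht
    _ ≤ gronwallBound r L c T := gronwallBound_mono hr hc hL (by linarith [ht.2])
    _ ≤ (r + c * T) * Real.exp (L * T) := gronwallBound_le_add_mul_mul_exp hL hc

theorem norm_layer_sub_le {act : E → E} {K : ℝ} (hK : 0 ≤ K)
    (hact : ∀ u v, ‖act u - act v‖ ≤ K * ‖u - v‖) (A W : E →L[ℝ] E) (b x x' : E) :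
    ‖A (act (W x + b)) - A (act (W x' + b))‖ ≤ K * ‖A‖ * ‖W‖ * ‖x - x'‖ := by
  calc ‖A (act (W x + b)) - A (act (W x' + b))‖
      ≤ ‖A‖ * (K * ‖W (x - x')‖) := by
        rw [← map_sub, map_sub W, ← add_sub_add_right_eq_sub (W x) (W x') b]
        exact (A.le_opNorm _).trans (mul_le_mul_of_nonneg_left (hact _ _) (norm_nonneg _))
    _ ≤ ‖A‖ * (K * (‖W‖ * ‖x - x'‖)) := by gcongr; exact W.le_opNorm _
    _ = K * ‖A‖ * ‖W‖ * ‖x - x'‖ := by ring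

noncomputable def integralDefect (z g : ℝ → E) (u : ℝ) : E := z u - z 0 - ∫ s in 0..u, g s

@[simp]
theorem integralDefect_zero (z g : ℝ → E) : integralDefect z g 0 = 0 := by
  simp [integralDefect]

theorem integralDefect_sub {z g : ℝ → E} {u v : ℝ} (hu : IntervalIntegrable g volume 0 u)
    (hv : IntervalIntegrable g volume 0 v) :
    integralDefect z g u - integralDefect z g v = z u - z v - ∫ s in v..u, g s := by
  rw [← integral_interval_sub_left hu hv, integralDefect, integralDefect]
  abel

theorem norm_sub_sub_integral_le {z g : ℝ → E} {X u v : ℝ} (hz : ‖z u - z v‖ ≤ X * |u - v|)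
    (hg : ∀ s ∈ Ι v u, ‖g s‖ ≤ X) : ‖z u - z v - ∫ s in v..u, g s‖ ≤ 2 * X * |u - v| := by
  linarith [norm_sub_le (z u - z v) (∫ s in v..u, g s), norm_integral_le_of_norm_le_const hg]

section Switching

variable {m N : ℕ} {T : ℝ} {F : Fin m → E → E} {Q : ℝ → E → E}

def IsCyclicSwitching (T : ℝ) (N : ℕ) (F : Fin m → E → E) (Q : ℝ → E → E) : Prop :=
  ∀ (n : ℕ) (i : Fin m), ∀ t ∈ Ico ((i : ℝ) * T / (m * N)) (((i : ℝ) + 1) * T / (m * N)),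
    ∀ x, Q (t + n * T / N) x = (m : ℝ) • F i x

theorem IsCyclicSwitching.apply_eq (hQ : IsCyclicSwitching T N F Q) {n : ℕ} {i : Fin m} {s : ℝ}
    (hs : s ∈ Ico (n * (T / N) + i * (T / N / m)) (n * (T / N) + i * (T / N / m) + T / N / m))
    (x : E) : Q s x = (m : ℝ) • F i x := by
  have e : ∀ k : ℝ, k * T / (m * N) = k * (T / N / m) := fun k => by ring
  have e' : (n : ℝ) * T / N = n * (T / N) := by ring
  have h := hQ n i (s - n * T / N)
    ⟨by rw [e, e']; linarith [hs.1], by rw [e, e']; linarith [hs.2]⟩ x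
  rwa [sub_add_cancel] at h

theorem IsCyclicSwitching.exists_apply_eq (hQ : IsCyclicSwitching T N F Q) (hm : 0 < m)
    (hN : 0 < N) (hT : 0 < T) {s : ℝ} (hs : 0 ≤ s) :
    ∃ i : Fin m, ∀ x, Q s x = (m : ℝ) • F i x := by
  set τ := T / N / m
  have hτ : 0 < τ := by positivity
  set k := ⌊s / τ⌋₊
  have hk : (k : ℝ) = m * (k / m : ℕ) + (k % m : ℕ) := by
    exact_mod_cast (Nat.div_add_mod k m).symm
  have hτN : T / N = m * τ := by simp only [τ]; field_simp
  have hstart : ((k / m : ℕ) : ℝ) * (T / N) + (k % m : ℕ) * τ = k * τ := by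
    rw [hk, hτN]; ring
  refine ⟨⟨k % m, Nat.mod_lt k hm⟩, hQ.apply_eq (n := k / m) ?_⟩
  rw [Fin.val_mk, hstart]
  exact ⟨(le_div_iff₀ hτ).1 (Nat.floor_le (div_nonneg hs hτ.le)),
    by simpa [add_mul] using (div_lt_iff₀ hτ).1 (Nat.lt_floor_add_one (s / τ))⟩

end Switching

variable [CompleteSpace E]

theorem hasDerivWithinAt_integral_Icc {g : ℝ → E} {a b s : ℝ} (hg : ContinuousOn g (Icc a b))
    (hs : s ∈ Icc a b) : HasDerivWithinAt (fun u => ∫ x in a..u, g x) (g s) (Icc a b) s := by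
  have : Fact (s ∈ Icc a b) := ⟨hs⟩
  refine integral_hasDerivWithinAt_right ?_ (hg.stronglyMeasurableAtFilter_nhdsWithin
    measurableSet_Icc s) (hg s hs)
  exact (hg.mono (uIcc_subset_Icc (left_mem_Icc.2 (hs.1.trans hs.2)) hs)).intervalIntegrable

theorem norm_sub_le_of_norm_integralDefect_le {F : E → E} {z y : ℝ → E} {L C T : ℝ}
    (hL : 0 ≤ L) (hF : ∀ x x', ‖F x - F x'‖ ≤ L * ‖x - x'‖) (hz : ContinuousOn z (Icc 0 T))
    (hy : ∀ t ∈ Icc 0 T, HasDerivAt y (F (y t)) t)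
    (hD : ∀ u ∈ Icc 0 T, ‖integralDefect z (fun s => F (z s)) u‖ ≤ C) :
    ∀ t ∈ Icc 0 T, ‖z t - y t‖ ≤ (C + ‖z 0 - y 0‖) * Real.exp (L * t) := by
  set D := integralDefect z (fun s => F (z s))
  set v := fun u => z 0 + (∫ s in 0..u, F (z s)) - y u
  have hzy : ∀ u, z u - y u = v u + D u := fun u => by simp only [v, D, integralDefect]; abel
  have hFz : ContinuousOn (fun s => F (z s)) (Icc 0 T) :=
    (LipschitzWith.of_dist_le' (by simpa [dist_eq_norm] using hF)).continuous.comp_continuousOn hz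
  have hv : ∀ s ∈ Icc 0 T, HasDerivWithinAt v (F (z s) - F (y s)) (Icc 0 T) s := fun s hs =>
    ((hasDerivWithinAt_integral_Icc hFz hs).const_add _).sub (hy s hs).hasDerivWithinAt
  have hbound : ∀ s ∈ Ico 0 T, ‖F (z s) - F (y s)‖ ≤ L * ‖v s‖ + L * C := fun s hs => by
    calc ‖F (z s) - F (y s)‖ ≤ L * ‖v s + D s‖ := hzy s ▸ hF _ _
      _ ≤ L * (‖v s‖ + C) := mul_le_mul_of_nonneg_left
          ((norm_add_le _ _).trans (by gcongr; exact hD s (Ico_subset_Icc_self hs))) hL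
      _ = L * ‖v s‖ + L * C := by ring
  intro t ht
  have hvt := norm_le_gronwallBound_of_norm_deriv_right_le (δ := ‖z 0 - y 0‖)
    (fun s hs => (hv s hs).continuousWithinAt)
    (fun s hs => (hv s (Ico_subset_Icc_self hs)).mono_of_mem_nhdsWithin (Icc_mem_nhdsGE_of_mem hs))
    (by simp [v]) hbound t ht
  rw [sub_zero, gronwallBound_ε_eq_K_mul] at hvt
  calc ‖z t - y t‖ ≤ ‖v t‖ + ‖D t‖ := hzy t ▸ norm_add_le _ _
    _ ≤ (C + ‖z 0 - y 0‖) * Real.exp (L * t) := by linarith [hD t ht]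

section Switching

variable {m N : ℕ} {T : ℝ} {F : Fin m → E → E} {Q : ℝ → E → E}

theorem IsCyclicSwitching.norm_period_defect_le (hQ : IsCyclicSwitching T N F Q) (hm : 0 < m)
    (hT : 0 ≤ T) {ℓ : Fin m → ℝ} {X : ℝ} (hX : 0 ≤ X) (hℓ : ∀ i, 0 ≤ ℓ i)
    (hF : ∀ i x x', ‖F i x - F i x'‖ ≤ ℓ i * ‖x - x'‖) {z : ℝ → E}
    (hz : ∀ t ∈ Icc 0 T, HasDerivAt z (Q t (z t)) t)
    (hzX : ∀ s ∈ Icc 0 T, ∀ u ∈ Icc 0 T, ‖z s - z u‖ ≤ X * |s - u|) {n : ℕ}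
    (hn : n * (T / N) + T / N ≤ T) :
    ‖z (n * (T / N) + T / N) - z (n * (T / N)) -
        ∫ s in n * (T / N)..n * (T / N) + T / N, ∑ i, F i (z s)‖ ≤
      (∑ i, ℓ i) * X * ((T / N) ^ 2 / 2) := by
  have hh : 0 ≤ T / N := div_nonneg hT (Nat.cast_nonneg N)
  have hperiod : Icc (n * (T / N)) (n * (T / N) + T / N) ⊆ Icc 0 T :=
    Icc_subset_Icc (by positivity) hn
  refine norm_sub_sub_integral_sum_le hm hh hX hℓ hF
    (fun s hs u hu => hzX s (hperiod hs) u (hperiod hu)) fun i => ?_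
  set a := n * (T / N) + i * (T / N / m)
  have hle : a ≤ a + T / N / m := le_add_of_nonneg_right (by positivity)
  have hab : Icc a (a + T / N / m) ⊆ Icc 0 T :=
    (Icc_subset_Icc (le_add_of_nonneg_right (by positivity))
      (by linarith [i.cast_mul_div_add_div_le hh])).trans hperiod
  have hFzc : ContinuousOn (fun s => (m : ℝ) • F i (z s)) (Icc a (a + T / N / m)) :=
    ((LipschitzWith.of_dist_le' (by simpa [dist_eq_norm] using hF i)).continuous.comp_continuousOn
      fun s hs => (hz s (hab hs)).continuousAt.continuousWithinAt).const_smul _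
  rw [← intervalIntegral.integral_smul, integral_eq_sub_of_hasDerivAt_of_le hle
    (fun s hs => (hz s (hab hs)).continuousAt.continuousWithinAt)
    (fun s hs => hQ.apply_eq ⟨hs.1.le, hs.2⟩ (z s) ▸ hz s (hab (Ioo_subset_Icc_self hs)))
    (hFzc.mono (uIcc_of_le hle).subset).intervalIntegrable]

theorem IsCyclicSwitching.norm_integralDefect_le (hQ : IsCyclicSwitching T N F Q) (hm : 0 < m)
    (hN : 0 < N) (hT : 0 < T) {ℓ : Fin m → ℝ} {L X : ℝ} (hℓ : ∀ i, 0 ≤ ℓ i)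
    (hF : ∀ i x x', ‖F i x - F i x'‖ ≤ ℓ i * ‖x - x'‖) (hℓL : ∑ i, ℓ i ≤ L) {z : ℝ → E}
    (hz : ∀ t ∈ Icc 0 T, HasDerivAt z (Q t (z t)) t) (hQX : ∀ s ∈ Icc 0 T, ‖Q s (z s)‖ ≤ X)
    (hFX : ∀ s ∈ Icc 0 T, ‖∑ i, F i (z s)‖ ≤ X) :
    ∀ u ∈ Icc 0 T, ‖integralDefect z (fun s => ∑ i, F i (z s)) u‖ ≤
      2 * (T / N) * X + L * X * T ^ 2 / (2 * N) := by
  set h := T / N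
  have hh : 0 < h := by positivity
  have hNh : (N : ℝ) * h = T := by simp only [h]; field_simp
  have hX : 0 ≤ X := (norm_nonneg _).trans (hQX 0 ⟨le_rfl, hT.le⟩)
  have hzX : ∀ s ∈ Icc 0 T, ∀ u ∈ Icc 0 T, ‖z s - z u‖ ≤ X * |s - u| := fun s hs u hu => by
    simpa using Convex.norm_image_sub_le_of_norm_hasDerivWithin_le
      (fun t ht => (hz t ht).hasDerivWithinAt) hQX (convex_Icc 0 T) hu hs
  have hgi : ∀ a ∈ Icc 0 T, IntervalIntegrable (fun s => ∑ i, F i (z s)) volume 0 a :=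
    fun a ha => ContinuousOn.intervalIntegrable <| (continuousOn_finsetSum _ fun i _ =>
      (LipschitzWith.of_dist_le' (by simpa [dist_eq_norm] using hF i)).continuous.comp_continuousOn
        fun s hs => (hz s hs).continuousAt.continuousWithinAt).mono
          (uIcc_subset_Icc ⟨le_rfl, hT.le⟩ ha)
  have hjT : ∀ j : ℕ, (j : ℝ) * h ≤ T → (j : ℝ) * h ∈ Icc 0 T := fun j hj => ⟨by positivity, hj⟩
  have hδ : 0 ≤ L * X * (h ^ 2 / 2) := by
    have := (Finset.sum_nonneg fun i _ => hℓ i).trans hℓL; positivity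
  refine fun u hu => (norm_le_of_norm_sub_le_of_steps (ε := 2 * h * X) hh hNh hδ
    (integralDefect_zero _ _) (fun j hj => ?_) (fun j v hv hvT => ?_) u hu).trans_eq ?_
  · have hj' : (j : ℝ) * h + h ≤ T := by
      rw [← hNh]; nlinarith [show (j : ℝ) + 1 ≤ N by exact_mod_cast hj]
    rw [add_one_mul, integralDefect_sub (hgi _ ⟨by positivity, hj'⟩) (hgi _ (hjT j (by linarith)))]
    exact (hQ.norm_period_defect_le hm hT.le hX hℓ hF hz hzX hj').trans (by gcongr)
  · have hj := hjT j (hv.1.trans hvT)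
    have hv' : v ∈ Icc 0 T := ⟨hj.1.trans hv.1, hvT⟩
    rw [integralDefect_sub (hgi v hv') (hgi _ hj)]
    refine (norm_sub_sub_integral_le (hzX v hv' _ hj)
      fun s hs => hFX s (uIcc_subset_Icc hj hv' (uIoc_subset_uIcc hs))).trans ?_
    rw [abs_of_nonneg (by linarith [hv.1])]
    nlinarith [hv.2]
  · simp only [h]; field_simp

theorem IsCyclicSwitching.norm_sub_le (hQ : IsCyclicSwitching T N F Q) (hm : 0 < m) (hN : 0 < N)
    (hT : 0 < T) {ℓ : Fin m → ℝ} {c L X r : ℝ} (hℓ : ∀ i, 0 ≤ ℓ i)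
    (hF : ∀ i x x', ‖F i x - F i x'‖ ≤ ℓ i * ‖x - x'‖) (hℓL : ∀ i, m * ℓ i ≤ L)
    (hc : ∀ i, m * ‖F i 0‖ ≤ c) (hX : X = c + L * (r + c * T) * Real.exp (L * T))
    {z y : ℝ → E} (hz0 : ‖z 0‖ ≤ r) (hz : ∀ t ∈ Icc 0 T, HasDerivAt z (Q t (z t)) t)
    (hy : ∀ t ∈ Icc 0 T, HasDerivAt y (∑ i, F i (y t)) t) :
    ∀ t ∈ Icc 0 T, ‖z t - y t‖ ≤
      (2 * (T / N) * X + L * X * T ^ 2 / (2 * N) + ‖z 0 - y 0‖) * Real.exp (L * t) := by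
  have hm' : (0 : ℝ) < m := Nat.cast_pos.2 hm
  have hL : 0 ≤ L := (mul_nonneg hm'.le (hℓ ⟨0, hm⟩)).trans (hℓL _)
  have hc0 : 0 ≤ c := (mul_nonneg hm'.le (norm_nonneg _)).trans (hc ⟨0, hm⟩)
  have hsumℓ : ∑ i, ℓ i ≤ L := Fin.sum_le_of_forall_mul_le hm hℓL
  have hFi : ∀ i x, m * ‖F i x‖ ≤ L * ‖x‖ + c := fun i x => by
    have := (norm_le_norm_add_norm_sub' (F i x) (F i 0)).trans (add_le_add le_rfl (hF i x 0))
    rw [sub_zero] at this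
    nlinarith [mul_le_mul_of_nonneg_left this hm'.le,
      mul_le_mul_of_nonneg_right (hℓL i) (norm_nonneg x), hc i]
  have hQle : ∀ s, 0 ≤ s → ∀ x, ‖Q s x‖ ≤ L * ‖x‖ + c := fun s hs x => by
    obtain ⟨i, hi⟩ := hQ.exists_apply_eq hm hN hT hs
    rw [hi, norm_smul, Real.norm_of_nonneg hm'.le]
    exact hFi i x
  have hFsum : ∀ x, ‖∑ i, F i x‖ ≤ L * ‖x‖ + c := fun x =>
    (norm_sum_le _ _).trans (Fin.sum_le_of_forall_mul_le hm fun i => hFi i x)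
  have hFlip : ∀ x x', ‖∑ i, F i x - ∑ i, F i x'‖ ≤ L * ‖x - x'‖ := fun x x' => by
    rw [← Finset.sum_sub_distrib]
    refine (norm_sum_le _ _).trans ((Finset.sum_le_sum fun i _ => hF i x x').trans ?_)
    rw [← Finset.sum_mul]
    exact mul_le_mul_of_nonneg_right hsumℓ (norm_nonneg _)
  have hzR := norm_le_of_norm_deriv_le_affine hL hc0 hz hz0 fun s hs => hQle s hs.1 (z s)
  have hXz : ∀ s ∈ Icc 0 T, L * ‖z s‖ + c ≤ X := fun s hs => by
    rw [hX]; nlinarith [mul_le_mul_of_nonneg_left (hzR s hs) hL]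
  exact norm_sub_le_of_norm_integralDefect_le hL hFlip
    (fun s hs => (hz s hs).continuousAt.continuousWithinAt) hy
    (hQ.norm_integralDefect_le hm hN hT hℓ hF hsumℓ hz
      (fun s hs => (hQle s hs.1 _).trans (hXz s hs)) fun s hs => (hFsum _).trans (hXz s hs))

end Switching

end NormedSpace

theorem dist_actVec_le {d : ℕ} {σ : ℝ → ℝ} {K : ℝ} (hσ : ∀ x y : ℝ, |σ x - σ y| ≤ K * |x - y|)
    (u v : PiLp 1 (fun _ : Fin d => ℝ)) : dist (actVec d σ u) (actVec d σ v) ≤ K * dist u v := by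
  simp only [PiLp.dist_eq_of_L1, Finset.mul_sum]
  exact Finset.sum_le_sum fun i _ => by simpa [actVec, Real.dist_eq] using hσ (u i) (v i)

theorem switching_vs_averaged_flow_error_general
    (d m N : ℕ) (hm : 0 < m) (hN : 0 < N) (T r : ℝ) (hT : 0 < T)
    (σ : ℝ → ℝ) (K : ℝ)
    (hσ : ∀ x y : ℝ, |σ x - σ y| ≤ K * |x - y|)
    (A W : Fin m → (PiLp 1 (fun _ : Fin d => ℝ) →L[ℝ] PiLp 1 (fun _ : Fin d => ℝ)))
    (b : Fin m → PiLp 1 (fun _ : Fin d => ℝ))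
    (Q : ℝ → PiLp 1 (fun _ : Fin d => ℝ) → PiLp 1 (fun _ : Fin d => ℝ))
    (hQ : ∀ (n : ℕ) (i : Fin m),
      ∀ t ∈ Ico ((i : ℝ) * T / (m * N)) (((i : ℝ) + 1) * T / (m * N)),
        ∀ x, Q (t + n * T / N) x = (m : ℝ) • A i (actVec d σ (W i x + b i)))
    (c L X : ℝ)
    (hc : c = (m : ℝ) * ⨆ i, ‖A i‖ * ‖actVec d σ (b i)‖)
    (hL : L = (m : ℝ) * ⨆ i, K * ‖A i‖ * ‖W i‖)
    (hX : X = c + L * (r + c * T) * Real.exp (L * T))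
    (z y : ℝ → PiLp 1 (fun _ : Fin d => ℝ))
    (hz0 : z 0 ∈ ball (0 : PiLp 1 (fun _ : Fin d => ℝ)) r)
    (hz : ∀ t ∈ Icc (0:ℝ) T, HasDerivAt z (Q t (z t)) t)
    (hy : ∀ t ∈ Icc (0:ℝ) T,
      HasDerivAt y (∑ i, A i (actVec d σ (W i (y t) + b i))) t) :
    ∀ t ∈ Icc (0:ℝ) T,
      ‖z t - y t‖ ≤
        (2 * (T / N) * X + L * X * T ^ 2 / (2 * N) + ‖z 0 - y 0‖) * Real.exp (L * t) := by
  have hK : 0 ≤ K := by simpa using (abs_nonneg _).trans (hσ 1 0)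
  have hact : ∀ u v, ‖actVec d σ u - actVec d σ v‖ ≤ K * ‖u - v‖ := by
    simpa [dist_eq_norm] using dist_actVec_le hσ
  have hbdd : ∀ f : Fin m → ℝ, BddAbove (range f) := fun f => (finite_range f).bddAbove
  refine IsCyclicSwitching.norm_sub_le (F := fun i x => A i (actVec d σ (W i x + b i)))
    hQ hm hN hT
    (ℓ := fun i => K * ‖A i‖ * ‖W i‖) (fun i => by positivity)
    (fun i => norm_layer_sub_le hK hact (A i) (W i) (b i))
    (fun i => hL ▸ mul_le_mul_of_nonneg_left (le_ciSup (hbdd fun i => K * ‖A i‖ * ‖W i‖) i)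
      (Nat.cast_nonneg m))
    (fun i => ?_) hX (mem_ball_zero_iff.1 hz0).le hz hy
  rw [hc, map_zero, zero_add]
  exact mul_le_mul_of_nonneg_left
    (((A i).le_opNorm _).trans (le_ciSup (hbdd fun i => ‖A i‖ * ‖actVec d σ (b i)‖) i))
    (Nat.cast_nonneg m)

/-- main quantitative lemma: if `z` solves the `T/N`-periodic switching NODE
`z' = Q_t(z)` and `y` solves the averaged NODE `y' = Q̃(y)` with `z(0), y(0) ∈ B_r(0)`, then
`|z(t) − y(t)| ≤ (2(T/N)X + K̃ X T²/(2N) + |z(0) − y(0)|) e^{K̃ t}` on `[0,T]`, where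
`c = m supᵢ ‖Aᵢ‖|Σ(bᵢ)|`, `K̃ = L = m supᵢ K‖Aᵢ‖‖Wᵢ‖`, `X = c + L(r + cT)e^{LT}`. -/
theorem switching_vs_averaged_flow_error
    (d m N : ℕ) (hm : 0 < m) (hN : 0 < N) (T r : ℝ) (hT : 0 < T) (hr : 0 < r)
    (σ : ℝ → ℝ) (K : ℝ)
    (hσ : ∀ x y : ℝ, |σ x - σ y| ≤ K * |x - y|)
    (A W : Fin m → (PiLp 1 (fun _ : Fin d => ℝ) →L[ℝ] PiLp 1 (fun _ : Fin d => ℝ)))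
    (b : Fin m → PiLp 1 (fun _ : Fin d => ℝ))
    (Q : ℝ → PiLp 1 (fun _ : Fin d => ℝ) → PiLp 1 (fun _ : Fin d => ℝ))
    (hQ : ∀ (n : ℕ) (i : Fin m),
      ∀ t ∈ Ico ((i : ℝ) * T / (m * N)) (((i : ℝ) + 1) * T / (m * N)),
        ∀ x, Q (t + n * T / N) x = (m : ℝ) • A i (actVec d σ (W i x + b i)))
    (c L X : ℝ)
    (hc : c = (m : ℝ) * ⨆ i, ‖A i‖ * ‖actVec d σ (b i)‖)
    (hL : L = (m : ℝ) * ⨆ i, K * ‖A i‖ * ‖W i‖)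
    (hX : X = c + L * (r + c * T) * Real.exp (L * T))
    (z y : ℝ → PiLp 1 (fun _ : Fin d => ℝ))
    (hz0 : z 0 ∈ ball (0 : PiLp 1 (fun _ : Fin d => ℝ)) r)
    (hy0 : y 0 ∈ ball (0 : PiLp 1 (fun _ : Fin d => ℝ)) r)
    (hz : ∀ t ∈ Icc (0:ℝ) T, HasDerivAt z (Q t (z t)) t)
    (hy : ∀ t ∈ Icc (0:ℝ) T,
      HasDerivAt y (∑ i, A i (actVec d σ (W i (y t) + b i))) t) :
    ∀ t ∈ Icc (0:ℝ) T,
      ‖z t - y t‖ ≤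
        (2 * (T / N) * X + L * X * T ^ 2 / (2 * N) + ‖z 0 - y 0‖) * Real.exp (L * t) :=
  switching_vs_averaged_flow_error_general d m N hm hN T r hT σ K hσ A W b Q hQ c L X hc hL hX z y
    hz0 hz hy
end

section
/- Let Q_t be the T/N-periodic switching field and Q̃ the averaged field as above, let z be the solution of z' = Q_t(z) with z(0) ∈ B_r(0), and suppose |z'(t)| ≤ X a.e. on [0,T]. Then for every t ∈ [0,T], the averaging defect satisfies |∫₀ᵗ Q_τ(z(τ)) dτ − ∫₀ᵗ Q̃(z(τ)) dτ| ≤ 2(T/N) X + K̃ X T²/(2N), where K̃ = m sup_i K‖A_i‖‖W_i‖. -/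
/-
Write `K̃` for the common Lipschitz constant of the `Q_s` and of `Q̃`. On a full period
`[kP, (k+1)P]` freeze the trajectory at the midpoint `μ`: by construction of the switching field
`∫ Q_s(z μ) ds = P • Q̃(z μ)` over the period, so the defect on that period consists only of the
two freezing errors, each at most `K̃ X |s - μ|` since `‖z'‖ ≤ X`. Integrating gives
`K̃ X P² / 2` per period, hence `K̃ X P T / 2` over the complete periods. On the last, incomplete
period `Q` is bounded by `X` and `Q̃(z τ)` by `X + K̃ X P / 2` (average `Q_s(z τ)` over a full
period), which costs at most `2 P X`.
-/

open Metric Set MeasureTheory intervalIntegral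
open scoped NNReal

theorem integral_abs_sub_eq_of_mem_Icc {a b c : ℝ} (hc : c ∈ Icc a b) :
    ∫ s in a..b, |c - s| = ((c - a) ^ 2 + (b - c) ^ 2) / 2 := by
  have hint : ∀ u v : ℝ, IntervalIntegrable (fun s => |c - s|) volume u v :=
    fun u v => (continuous_const.sub continuous_id).abs.intervalIntegrable u v
  have hleft : ∫ s in a..c, |c - s| = ∫ s in a..c, (c - s) :=
    integral_congr fun s hs => abs_of_nonneg (by rw [uIcc_of_le hc.1] at hs; linarith [hs.2])
  have hright : ∫ s in c..b, |c - s| = ∫ s in c..b, (s - c) :=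
    integral_congr fun s hs => abs_of_nonpos (by rw [uIcc_of_le hc.2] at hs; linarith [hs.1])
      |>.trans (neg_sub c s)
  rw [← integral_add_adjacent_intervals (hint a c) (hint c b), hleft, hright,
    integral_sub intervalIntegrable_const intervalIntegrable_id,
    integral_sub intervalIntegrable_id intervalIntegrable_const, integral_id, integral_id,
    intervalIntegral.integral_const, intervalIntegral.integral_const, smul_eq_mul, smul_eq_mul]
  ring

theorem exists_nat_mul_le_lt {x y : ℝ} (hx : 0 ≤ x) (hy : 0 < y) :
    ∃ n : ℕ, n * y ≤ x ∧ x < (n + 1) * y :=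
  ⟨⌊x / y⌋₊, (le_div_iff₀ hy).1 (Nat.floor_le (div_nonneg hx hy.le)),
    (div_lt_iff₀ hy).1 (Nat.lt_floor_add_one _)⟩

theorem exists_nat_mem_Icc_mul_of_mem_Icc {P t : ℝ} {N : ℕ} (hP : 0 < P) (hN : 0 < N)
    (ht : t ∈ Icc 0 (N * P)) : ∃ k : ℕ, k + 1 ≤ N ∧ t ∈ Icc (k * P) ((k + 1) * P) := by
  rcases ht.2.lt_or_eq with htN | rfl
  · obtain ⟨k, hk, hk'⟩ := exists_nat_mul_le_lt ht.1 hP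
    refine ⟨k, ?_, hk, hk'.le⟩
    exact_mod_cast (mul_lt_mul_iff_left₀ hP).1 (hk.trans_lt htN)
  · exact ⟨N - 1, by omega, by rw [Nat.cast_pred hN]; constructor <;> nlinarith⟩

theorem LipschitzWith.actVec {d : ℕ} {σ : ℝ → ℝ} {K : ℝ≥0} (hσ : LipschitzWith K σ) :
    LipschitzWith K (actVec d σ) :=
  LipschitzWith.of_dist_le_mul fun u v => by
    simp only [PiLp.dist_eq_of_L1, Finset.mul_sum]
    exact Finset.sum_le_sum fun i _ => hσ.dist_le_mul (u i) (v i)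

theorem lipschitzWith_neuron {E : Type*} [NormedAddCommGroup E] [NormedSpace ℝ E] {d : ℕ}
    {σ : ℝ → ℝ} {K : ℝ≥0} (hσ : LipschitzWith K σ) (A : PiLp 1 (fun _ : Fin d => ℝ) →L[ℝ] E)
    (W : E →L[ℝ] PiLp 1 (fun _ : Fin d => ℝ)) (b : PiLp 1 (fun _ : Fin d => ℝ)) :
    LipschitzWith (‖A‖₊ * K * ‖W‖₊) fun x => A (actVec d σ (W x + b)) := by
  have h := (A.lipschitz.comp hσ.actVec).comp (W.lipschitz.add (LipschitzWith.const b))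
  rwa [add_zero] at h

theorem lipschitzWith_sum {ι E F : Type*} [Fintype ι] [SeminormedAddCommGroup E]
    [SeminormedAddCommGroup F] {f : ι → E → F} {K : ℝ≥0} (hf : ∀ i, LipschitzWith K (f i)) :
    LipschitzWith (Fintype.card ι * K) fun x => ∑ i, f i x :=
  LipschitzWith.of_dist_le_mul fun x y => by
    rw [dist_eq_norm, dist_eq_norm, ← Finset.sum_sub_distrib]
    calc ‖∑ i, (f i x - f i y)‖ ≤ ∑ i, ‖f i x - f i y‖ := norm_sum_le _ _
      _ ≤ ∑ _i : ι, K * ‖x - y‖ := Finset.sum_le_sum fun i _ => (hf i).norm_sub_le x y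
      _ = _ := by simp [mul_assoc]

/-- The factor `m` makes the average of `Q` over a period equal to `∑ i, F i`. -/
def IsSwitchingField {E : Type*} [AddCommGroup E] [Module ℝ E] {m : ℕ} (Q : ℝ → E → E)
    (F : Fin m → E → E) (P : ℝ) : Prop :=
  ∀ (n : ℕ) (i : Fin m), ∀ t ∈ Ico ((i : ℝ) * P / m) (((i : ℝ) + 1) * P / m), ∀ x,
    Q (t + n * P) x = (m : ℝ) • F i x

namespace IsSwitchingField

variable {E : Type*} [NormedAddCommGroup E] [NormedSpace ℝ E] {m : ℕ} {Q : ℝ → E → E}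
  {F : Fin m → E → E} {P : ℝ}

theorem eqOn_Ico (hQ : IsSwitchingField Q F P) (k : ℕ) (i : Fin m) (c : E) :
    EqOn (fun s => Q s c) (fun _ => (m : ℝ) • F i c)
      (Ico (k * P + i * P / m) (k * P + (i + 1) * P / m)) := fun s hs => by
  have h := hQ k i (s - k * P) ⟨by linarith [hs.1], by linarith [hs.2]⟩ c
  rwa [sub_add_cancel] at h

theorem exists_eq (hQ : IsSwitchingField Q F P) (hm : 0 < m) (hP : 0 < P) {s : ℝ}
    (hs : 0 ≤ s) : ∃ i, Q s = (m : ℝ) • F i := by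
  obtain ⟨k, hk, hk'⟩ := exists_nat_mul_le_lt hs hP
  obtain ⟨j, hj, hj'⟩ := exists_nat_mul_le_lt (x := s - k * P) (by linarith)
    (div_pos hP (Nat.cast_pos.2 hm))
  have hjm : j < m := by
    have : (j : ℝ) * (P / m) < m * (P / m) := by
      rw [mul_div_cancel₀ _ (Nat.cast_pos.2 hm).ne']; linarith
    exact_mod_cast lt_of_mul_lt_mul_right this (div_pos hP (Nat.cast_pos.2 hm)).le
  refine ⟨⟨j, hjm⟩, funext fun x => ?_⟩
  apply hQ.eqOn_Ico k ⟨j, hjm⟩ x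
  simp only [mul_div_assoc] at hj hj' ⊢
  constructor <;> linarith

theorem lipschitzWith {K : ℝ≥0} (hQ : IsSwitchingField Q F P) (hm : 0 < m) (hP : 0 < P)
    (hF : ∀ i, LipschitzWith K (F i)) {s : ℝ} (hs : 0 ≤ s) : LipschitzWith (m * K) (Q s) := by
  obtain ⟨i, hi⟩ := hQ.exists_eq hm hP hs
  have h := (lipschitzWith_smul (m : ℝ)).comp (hF i)
  rw [Real.nnnorm_natCast] at h
  rwa [hi]

theorem intervalIntegrable_and_integral_eq [CompleteSpace E] (hQ : IsSwitchingField Q F P)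
    (hm : 0 < m) (hP : 0 < P) (k : ℕ) (c : E) :
    IntervalIntegrable (fun s => Q s c) volume (k * P) ((k + 1) * P) ∧
      ∫ s in k * P..(k + 1) * P, Q s c = P • ∑ i, F i c := by
  set a : ℕ → ℝ := fun j => k * P + j * P / m
  have ha0 : a 0 = k * P := by simp [a]
  have ham : a m = (k + 1) * P := by simp only [a]; field_simp
  have hpiece : ∀ j (hj : j < m), EqOn (fun _ => (m : ℝ) • F ⟨j, hj⟩ c) (fun s => Q s c)
      (uIoo (a j) (a (j + 1))) := fun j hj s hs => by
    have hle : a j ≤ a (j + 1) := by simp only [a]; gcongr; simp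
    rw [uIoo_of_le hle] at hs
    refine (hQ.eqOn_Ico k ⟨j, hj⟩ c (Ioo_subset_Ico_self ?_)).symm
    simpa [a] using hs
  have hint : ∀ j < m, IntervalIntegrable (fun s => Q s c) volume (a j) (a (j + 1)) :=
    fun j hj => intervalIntegrable_const.congr_uIoo (hpiece j hj)
  refine ⟨ha0 ▸ ham ▸ IntervalIntegrable.trans_iterate hint, ?_⟩
  rw [← ha0, ← ham, ← sum_integral_adjacent_intervals hint, Finset.smul_sum,
    ← Fin.sum_univ_eq_sum_range (fun j => ∫ s in a j..a (j + 1), Q s c)]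
  refine Finset.sum_congr rfl fun i _ => ?_
  rw [← integral_congr_uIoo (hpiece i i.isLt), intervalIntegral.integral_const, smul_smul]
  congr 1
  simp only [a]; field_simp; push_cast; ring

end IsSwitchingField

section BoundedSolution

variable {E : Type*} [NormedAddCommGroup E] [NormedSpace ℝ E]

structure IsBoundedSolutionOn (Q : ℝ → E → E) (z : ℝ → E) (X : ℝ) (s : Set ℝ) : Prop where
  hasDerivAt : ∀ t ∈ s, HasDerivAt z (Q t (z t)) t
  norm_le : ∀ᵐ t ∂volume.restrict s, ‖Q t (z t)‖ ≤ X

namespace IsBoundedSolutionOn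

variable {Q : ℝ → E → E} {z : ℝ → E} {X a b : ℝ}

theorem mono {s s' : Set ℝ} (h : IsBoundedSolutionOn Q z X s) (hs : s' ⊆ s) :
    IsBoundedSolutionOn Q z X s' :=
  ⟨fun t ht => h.hasDerivAt t (hs ht), ae_restrict_of_ae_restrict_of_subset hs h.norm_le⟩

theorem nonneg (h : IsBoundedSolutionOn Q z X (Icc a b)) (hab : a < b) : 0 ≤ X := by
  have : (ae (volume.restrict (Icc a b))).NeBot :=
    ae_neBot.2 (by simp [Measure.restrict_eq_zero, hab])
  obtain ⟨t, ht⟩ := h.norm_le.exists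
  exact (norm_nonneg _).trans ht

theorem continuousOn (h : IsBoundedSolutionOn Q z X (Icc a b)) : ContinuousOn z (Icc a b) :=
  fun t ht => (h.hasDerivAt t ht).continuousAt.continuousWithinAt

theorem intervalIntegrable [CompleteSpace E] (h : IsBoundedSolutionOn Q z X (Icc a b))
    (hab : a ≤ b) : IntervalIntegrable (fun t => Q t (z t)) volume a b := by
  rw [intervalIntegrable_iff_integrableOn_Icc_of_le hab]
  refine Integrable.mono' (integrableOn_const measure_Icc_lt_top.ne) ?_ h.norm_le
  refine (stronglyMeasurable_deriv z).aestronglyMeasurable.congr ?_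
  filter_upwards [ae_restrict_mem measurableSet_Icc] with t ht
  exact (h.hasDerivAt t ht).deriv

theorem intervalIntegrable_comp {f : E → E} (h : IsBoundedSolutionOn Q z X (Icc a b))
    (hf : Continuous f) (hab : a ≤ b) : IntervalIntegrable (fun t => f (z t)) volume a b :=
  ContinuousOn.intervalIntegrable <| by
    rw [uIcc_of_le hab]; exact hf.comp_continuousOn h.continuousOn

theorem norm_sub_le [CompleteSpace E] (h : IsBoundedSolutionOn Q z X (Icc a b)) {u v : ℝ}
    (hu : u ∈ Icc a b) (hv : v ∈ Icc a b) : ‖z v - z u‖ ≤ X * |v - u| := by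
  wlog huv : u ≤ v generalizing u v
  · rw [norm_sub_rev, abs_sub_comm]
    exact this hv hu (le_of_not_ge huv)
  have hsub : Icc u v ⊆ Icc a b := Icc_subset_Icc hu.1 hv.2
  rw [← integral_eq_sub_of_hasDerivAt (fun t ht => h.hasDerivAt t (hsub (uIcc_of_le huv ▸ ht)))
    ((h.mono hsub).intervalIntegrable huv)]
  refine norm_integral_le_of_norm_le_const_ae ?_
  rw [uIoc_of_le huv]
  filter_upwards [(ae_restrict_iff' measurableSet_Icc).1 h.norm_le] with t ht htuv
  exact ht (hsub (Ioc_subset_Icc_self htuv))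

end IsBoundedSolutionOn

end BoundedSolution

section Averaging

variable {E : Type*} [NormedAddCommGroup E] [NormedSpace ℝ E] [CompleteSpace E]
  {Q : ℝ → E → E} {Qavg : E → E} {z : ℝ → E} {C : ℝ≥0} {X a b P T : ℝ} {N : ℕ}

theorem intervalIntegrable_sub_averaged (h : IsBoundedSolutionOn Q z X (Icc a b))
    (hQavg : LipschitzWith C Qavg) (hab : a ≤ b) :
    IntervalIntegrable (fun s => Q s (z s) - Qavg (z s)) volume a b :=
  (h.intervalIntegrable hab).sub (h.intervalIntegrable_comp hQavg.continuous hab)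

theorem norm_integral_sub_averaged_le (h : IsBoundedSolutionOn Q z X (Icc a b))
    (hQ : ∀ s ∈ Icc a b, LipschitzWith C (Q s)) (hQavg : LipschitzWith C Qavg) (hab : a ≤ b)
    (hint : ∀ c, IntervalIntegrable (fun s => Q s c) volume a b)
    (havg : ∀ c, ∫ s in a..b, Q s c = (b - a) • Qavg c) :
    ‖∫ s in a..b, (Q s (z s) - Qavg (z s))‖ ≤ C * X * (b - a) ^ 2 / 2 := by
  have hμ : (a + b) / 2 ∈ Icc a b := ⟨by linarith, by linarith⟩
  set c := z ((a + b) / 2)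
  have hfrozen : ∫ s in a..b, (Q s c - Qavg c) = 0 := by
    rw [integral_sub (hint _) intervalIntegrable_const, havg, intervalIntegral.integral_const,
      sub_self]
  have hsplit : ∫ s in a..b, (Q s (z s) - Qavg (z s)) =
      ∫ s in a..b, ((Q s (z s) - Q s c) + (Qavg c - Qavg (z s))) := by
    rw [← sub_zero (∫ s in a..b, (Q s (z s) - Qavg (z s))), ← hfrozen,
      ← integral_sub (intervalIntegrable_sub_averaged h hQavg hab)
        ((hint _).sub intervalIntegrable_const)]
    exact integral_congr fun s _ => by abel
  have hbound : ∀ s ∈ Ioc a b, ‖(Q s (z s) - Q s c) + (Qavg c - Qavg (z s))‖ ≤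
      2 * (C * X) * |(a + b) / 2 - s| := fun s hs => by
    have hs' := Ioc_subset_Icc_self hs
    calc _ ≤ ‖Q s (z s) - Q s c‖ + ‖Qavg c - Qavg (z s)‖ := norm_add_le _ _
      _ ≤ C * ‖z s - c‖ + C * ‖c - z s‖ :=
          add_le_add ((hQ s hs').norm_sub_le _ _) (hQavg.norm_sub_le _ _)
      _ = 2 * C * ‖z s - c‖ := by rw [norm_sub_rev c]; ring
      _ ≤ 2 * C * (X * |s - (a + b) / 2|) := by gcongr; exact h.norm_sub_le hμ hs'
      _ = _ := by rw [abs_sub_comm]; ring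
  rw [hsplit]
  refine (norm_integral_le_of_norm_le hab (ae_of_all _ hbound)
    ((continuous_const.mul (continuous_const.sub continuous_id).abs).intervalIntegrable _ _)).trans
    (le_of_eq ?_)
  rw [intervalIntegral.integral_const_mul, integral_abs_sub_eq_of_mem_Icc hμ]
  ring

theorem norm_averaged_le (h : IsBoundedSolutionOn Q z X (Icc a b))
    (hQ : ∀ s ∈ Icc a b, LipschitzWith C (Q s)) (hab : a < b)
    (havg : ∀ c, ∫ s in a..b, Q s c = (b - a) • Qavg c) {τ : ℝ} (hτ : τ ∈ Icc a b) :
    ‖Qavg (z τ)‖ ≤ X + C * X * (b - a) / 2 := by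
  have hX := h.nonneg hab
  have hbound : ∀ᵐ s, s ∈ Ioc a b → ‖Q s (z τ)‖ ≤ X + C * X * |τ - s| := by
    filter_upwards [(ae_restrict_iff' measurableSet_Icc).1 h.norm_le] with s hsX hs
    have hs' := Ioc_subset_Icc_self hs
    calc ‖Q s (z τ)‖ ≤ ‖Q s (z s)‖ + ‖Q s (z τ) - Q s (z s)‖ := norm_le_insert' _ _
      _ ≤ X + C * (X * |τ - s|) :=
          add_le_add (hsX hs') (((hQ s hs').norm_sub_le _ _).trans
            (by gcongr; exact h.norm_sub_le hs' hτ))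
      _ = _ := by ring
  have hint : IntervalIntegrable (fun s => C * X * |τ - s|) volume a b :=
    (continuous_const.mul (continuous_const.sub continuous_id).abs).intervalIntegrable _ _
  have key : (b - a) * ‖Qavg (z τ)‖ ≤ (b - a) * (X + C * X * (b - a) / 2) :=
    calc (b - a) * ‖Qavg (z τ)‖ = ‖∫ s in a..b, Q s (z τ)‖ := by
          rw [havg, norm_smul, Real.norm_of_nonneg (sub_nonneg.2 hab.le)]
      _ ≤ ∫ s in a..b, (X + C * X * |τ - s|) := norm_integral_le_of_norm_le hab.le hbound
          (intervalIntegrable_const.add hint)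
      _ = (b - a) * X + C * X * (((τ - a) ^ 2 + (b - τ) ^ 2) / 2) := by
          rw [integral_add intervalIntegrable_const hint,
            intervalIntegral.integral_const, intervalIntegral.integral_const_mul,
            integral_abs_sub_eq_of_mem_Icc hτ, smul_eq_mul]
      _ ≤ _ := by
          nlinarith [mul_nonneg (mul_nonneg C.coe_nonneg hX)
            (mul_nonneg (sub_nonneg.2 hτ.1) (sub_nonneg.2 hτ.2))]
  exact le_of_mul_le_mul_left key (sub_pos.2 hab)

theorem norm_integral_sub_averaged_le_of_mem_Icc (h : IsBoundedSolutionOn Q z X (Icc a b))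
    (hQ : ∀ s ∈ Icc a b, LipschitzWith C (Q s)) (hab : a < b)
    (havg : ∀ c, ∫ s in a..b, Q s c = (b - a) • Qavg c) {t : ℝ} (ht : t ∈ Icc a b) :
    ‖∫ s in a..t, (Q s (z s) - Qavg (z s))‖ ≤ (2 * X + C * X * (b - a) / 2) * (t - a) := by
  rw [← abs_of_nonneg (sub_nonneg.2 ht.1)]
  refine norm_integral_le_of_norm_le_const_ae ?_
  filter_upwards [(ae_restrict_iff' measurableSet_Icc).1 h.norm_le] with s hsX hs
  rw [uIoc_of_le ht.1] at hs
  have hs' : s ∈ Icc a b := ⟨hs.1.le, hs.2.trans ht.2⟩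
  calc _ ≤ ‖Q s (z s)‖ + ‖Qavg (z s)‖ := norm_sub_le _ _
    _ ≤ X + (X + C * X * (b - a) / 2) :=
        add_le_add (hsX hs') (norm_averaged_le h hQ hab havg hs')
    _ = _ := by ring

theorem norm_integral_sub_averaged_le_nat_mul (h : IsBoundedSolutionOn Q z X (Icc 0 T))
    (hQ : ∀ s ∈ Icc 0 T, LipschitzWith C (Q s)) (hQavg : LipschitzWith C Qavg) (hP : 0 ≤ P)
    (hint : ∀ (k : ℕ) c, IntervalIntegrable (fun s => Q s c) volume (k * P) ((k + 1) * P))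
    (havg : ∀ (k : ℕ) c, ∫ s in k * P..(k + 1) * P, Q s c = P • Qavg c) :
    ∀ n : ℕ, n * P ≤ T → ‖∫ s in 0..n * P, (Q s (z s) - Qavg (z s))‖ ≤ n * (C * X * P ^ 2 / 2)
  | 0, _ => by simp
  | n + 1, hn => by
    push_cast at hn ⊢
    have hnP : (n : ℝ) * P ≤ (n + 1) * P := by nlinarith
    have hsub : Icc ((n : ℝ) * P) ((n + 1) * P) ⊆ Icc 0 T :=
      Icc_subset_Icc (by positivity) hn
    have hperiod := norm_integral_sub_averaged_le (h.mono hsub) (fun s hs => hQ s (hsub hs))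
      hQavg hnP (hint n) (fun c => by rw [havg, show (n + 1) * P - n * P = P by ring])
    rw [← integral_add_adjacent_intervals
      (intervalIntegrable_sub_averaged (h.mono (Icc_subset_Icc le_rfl (hnP.trans hn))) hQavg
        (by positivity))
      (intervalIntegrable_sub_averaged (h.mono hsub) hQavg hnP)]
    refine (norm_add_le _ _).trans ?_
    have ih := norm_integral_sub_averaged_le_nat_mul h hQ hQavg hP hint havg n (hnP.trans hn)
    rw [show (n + 1) * P - n * P = P by ring] at hperiod
    linarith

theorem norm_integral_sub_integral_averaged_le (h : IsBoundedSolutionOn Q z X (Icc 0 T))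
    (hQ : ∀ s ∈ Icc 0 T, LipschitzWith C (Q s)) (hQavg : LipschitzWith C Qavg) (hP : 0 < P)
    (hN : 0 < N) (hT : N * P = T)
    (hint : ∀ (k : ℕ) c, IntervalIntegrable (fun s => Q s c) volume (k * P) ((k + 1) * P))
    (havg : ∀ (k : ℕ) c, ∫ s in k * P..(k + 1) * P, Q s c = P • Qavg c) {t : ℝ}
    (ht : t ∈ Icc 0 T) :
    ‖(∫ s in 0..t, Q s (z s)) - ∫ s in 0..t, Qavg (z s)‖ ≤ 2 * P * X + C * X * P * T / 2 := by
  obtain ⟨k, hkN, hkt⟩ := exists_nat_mem_Icc_mul_of_mem_Icc hP hN (hT ▸ ht)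
  have hkT : (k + 1) * P ≤ T := hT ▸ by gcongr; exact_mod_cast hkN
  have hsub : Icc ((k : ℝ) * P) ((k + 1) * P) ⊆ Icc 0 T := Icc_subset_Icc (by positivity) hkT
  have hX := (h.mono hsub).nonneg (by linarith)
  have hperiods := norm_integral_sub_averaged_le_nat_mul h hQ hQavg hP.le hint havg k
    (by linarith [hkt.1, hkt.2])
  have htail := norm_integral_sub_averaged_le_of_mem_Icc (h.mono hsub)
    (fun s hs => hQ s (hsub hs)) (by linarith)
    (fun c => by rw [havg, show (k + 1) * P - k * P = P by ring]) hkt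
  rw [show (k + 1) * P - k * P = P by ring] at htail
  have h0t := h.mono (Icc_subset_Icc le_rfl ht.2)
  rw [← integral_sub (h0t.intervalIntegrable ht.1)
      (h0t.intervalIntegrable_comp hQavg.continuous ht.1),
    ← integral_add_adjacent_intervals
      (intervalIntegrable_sub_averaged (h0t.mono (Icc_subset_Icc le_rfl hkt.1)) hQavg
        (by positivity))
      (intervalIntegrable_sub_averaged (h0t.mono (Icc_subset_Icc (by positivity) le_rfl)) hQavg
        hkt.1)]
  refine (norm_add_le _ _).trans ?_
  nlinarith [mul_nonneg hX (sub_nonneg.2 hkt.2),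
    mul_nonneg (mul_nonneg (mul_nonneg C.coe_nonneg hX) hP.le) (sub_nonneg.2 ht.2)]

end Averaging

theorem averaging_defect_bound_general
    (d m N : ℕ) (hm : 0 < m) (hN : 0 < N) (T X : ℝ) (hT : 0 < T)
    (σ : ℝ → ℝ) (K : ℝ)
    (hσ : ∀ x y : ℝ, |σ x - σ y| ≤ K * |x - y|)
    (A W : Fin m → (PiLp 1 (fun _ : Fin d => ℝ) →L[ℝ] PiLp 1 (fun _ : Fin d => ℝ)))
    (b : Fin m → PiLp 1 (fun _ : Fin d => ℝ))
    (Q : ℝ → PiLp 1 (fun _ : Fin d => ℝ) → PiLp 1 (fun _ : Fin d => ℝ))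
    (hQ : ∀ (n : ℕ) (i : Fin m),
      ∀ t ∈ Ico ((i : ℝ) * T / (m * N)) (((i : ℝ) + 1) * T / (m * N)),
        ∀ x, Q (t + n * T / N) x = (m : ℝ) • A i (actVec d σ (W i x + b i)))
    (z : ℝ → PiLp 1 (fun _ : Fin d => ℝ))
    (hz : ∀ t ∈ Icc (0:ℝ) T, HasDerivAt z (Q t (z t)) t)
    (hX : ∀ᵐ t ∂(volume.restrict (Icc (0:ℝ) T)), ‖Q t (z t)‖ ≤ X) :
    ∀ t ∈ Icc (0:ℝ) T,
      ‖(∫ τ in (0:ℝ)..t, Q τ (z τ)) -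
          ∫ τ in (0:ℝ)..t, ∑ i, A i (actVec d σ (W i (z τ) + b i))‖ ≤
        2 * (T / N) * X + ((m : ℝ) * ⨆ i, K * ‖A i‖ * ‖W i‖) * X * T ^ 2 / (2 * N) := by
  intro t ht
  have hK : 0 ≤ K := by simpa using (abs_nonneg _).trans (hσ 1 0)
  have hσ' : LipschitzWith K.toNNReal σ := LipschitzWith.of_dist_le_mul fun x y => by
    rw [Real.dist_eq, Real.dist_eq, Real.coe_toNNReal _ hK]; exact hσ x y
  set K' := (⨆ i, K * ‖A i‖ * ‖W i‖).toNNReal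
  have hK' : (K' : ℝ) = ⨆ i, K * ‖A i‖ * ‖W i‖ :=
    Real.coe_toNNReal _ (Real.iSup_nonneg fun i => by positivity)
  have hF : ∀ i, LipschitzWith K' fun x => A i (actVec d σ (W i x + b i)) := fun i => by
    refine (lipschitzWith_neuron hσ' (A i) (W i) (b i)).weaken ?_
    rw [← NNReal.coe_le_coe, hK', NNReal.coe_mul, NNReal.coe_mul, Real.coe_toNNReal _ hK,
      coe_nnnorm, coe_nnnorm]
    exact (le_ciSup (Set.finite_range _).bddAbove i).trans_eq' (by ring)
  have hP : 0 < T / N := div_pos hT (Nat.cast_pos.2 hN)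
  have hsw : IsSwitchingField Q (fun i x => A i (actVec d σ (W i x + b i))) (T / N) := by
    intro n i s hs x
    have e : ∀ a : ℝ, a * (T / N) / m = a * T / (m * N) := fun a => by ring
    rw [e, e] at hs
    rw [← mul_div_assoc]
    exact hQ n i s hs x
  have hperiod := hsw.intervalIntegrable_and_integral_eq hm hP
  calc _ ≤ 2 * (T / N) * X + (m * K' : ℝ≥0) * X * (T / N) * T / 2 :=
        norm_integral_sub_integral_averaged_le ⟨hz, hX⟩
          (fun s hs => hsw.lipschitzWith hm hP hF hs.1) (by simpa using lipschitzWith_sum hF)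
          hP hN (by field_simp) (fun k c => (hperiod k c).1) (fun k c => (hperiod k c).2) ht
    _ = _ := by rw [NNReal.coe_mul, NNReal.coe_natCast, hK']; ring

/-- the averaging defect of the switching field along a solution `z` with
`|z'| ≤ X` a.e. is bounded: `|∫₀ᵗ Q_τ(z(τ)) dτ − ∫₀ᵗ Q̃(z(τ)) dτ| ≤ 2(T/N)X + K̃ X T²/(2N)`,
where `K̃ = m supᵢ K‖Aᵢ‖‖Wᵢ‖`. -/
theorem averaging_defect_bound
    (d m N : ℕ) (hm : 0 < m) (hN : 0 < N) (T r X : ℝ) (hT : 0 < T) (hr : 0 < r)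
    (σ : ℝ → ℝ) (K : ℝ)
    (hσ : ∀ x y : ℝ, |σ x - σ y| ≤ K * |x - y|)
    (A W : Fin m → (PiLp 1 (fun _ : Fin d => ℝ) →L[ℝ] PiLp 1 (fun _ : Fin d => ℝ)))
    (b : Fin m → PiLp 1 (fun _ : Fin d => ℝ))
    (Q : ℝ → PiLp 1 (fun _ : Fin d => ℝ) → PiLp 1 (fun _ : Fin d => ℝ))
    (hQ : ∀ (n : ℕ) (i : Fin m),
      ∀ t ∈ Ico ((i : ℝ) * T / (m * N)) (((i : ℝ) + 1) * T / (m * N)),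
        ∀ x, Q (t + n * T / N) x = (m : ℝ) • A i (actVec d σ (W i x + b i)))
    (z : ℝ → PiLp 1 (fun _ : Fin d => ℝ))
    (hz0 : z 0 ∈ ball (0 : PiLp 1 (fun _ : Fin d => ℝ)) r)
    (hz : ∀ t ∈ Icc (0:ℝ) T, HasDerivAt z (Q t (z t)) t)
    (hX : ∀ᵐ t ∂(volume.restrict (Icc (0:ℝ) T)), ‖Q t (z t)‖ ≤ X) :
    ∀ t ∈ Icc (0:ℝ) T,
      ‖(∫ τ in (0:ℝ)..t, Q τ (z τ)) -
          ∫ τ in (0:ℝ)..t, ∑ i, A i (actVec d σ (W i (z τ) + b i))‖ ≤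
        2 * (T / N) * X + ((m : ℝ) * ⨆ i, K * ‖A i‖ * ‖W i‖) * X * T ^ 2 / (2 * N) :=
  averaging_defect_bound_general d m N hm hN T X hT σ K hσ A W b Q hQ z hz hX
end
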